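/- Lah expansion of rising in terms of falling factorials: for all real r and n ∈ ℕ, (x+r)^{n↑} = Σ_{k=0}^n L(n,k)_r (x−r)^{k↓}, where L(n,k)_r = (n!/k!)·(k+2r)^{(n−k)↑}/(n−k)! and y^{k↓} denotes the falling factorial. -/

import Mathlib

/-!
Writing `L(n,k)_r = C(n,k) · (k+2r)^{(n−k)↑}` and `y = x − r`, `s = 2r`, the claim becomes
`(y+s)^{n↑} = ∑ₖ C(n,k) · y^{k↓} · (s+k)^{(n−k)↑}`, which holds over any commutative ring.
It is proved like the binomial theorem, by induction on `n` for all `s` at once: peel off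
`(y+s)^{(n+1)↑} = (y+s) · (y+s+1)^{n↑}`, and in the `k`-th term of the expansion of
`(y+s+1)^{n↑}` split `y + s = (y − k) + (s + k)`; the two pieces extend the falling and the
rising factorial respectively, and Pascal's rule reassembles the sum.
-/

open Polynomial Finset

/-- The `r`-Lah number `L(n,k)_r = (n!/k!) · (k+2r)^{(n−k)↑}/(n−k)!`. -/
noncomputable def rLah (r : ℝ) (n k : ℕ) : ℝ :=
  ((n.factorial : ℝ) / (k.factorial : ℝ)) *
    ((ascPochhammer ℝ (n - k)).eval ((k : ℝ) + 2 * r) / ((n - k).factorial : ℝ))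

theorem ascPochhammer_succ_eval_left {S : Type*} [CommSemiring S] (n : ℕ) (s : S) :
    (ascPochhammer S (n + 1)).eval s = s * (ascPochhammer S n).eval (s + 1) := by
  rw [ascPochhammer_succ_left, eval_mul, eval_X, eval_comp, eval_add, eval_X, eval_one]

theorem ascPochhammer_eval_add_eq_sum_choose_mul_descPochhammer {R : Type*} [CommRing R]
    (n : ℕ) (y s : R) :
    (ascPochhammer R n).eval (y + s) =
      ∑ k ∈ range (n + 1), (n.choose k : R) *
        ((descPochhammer R k).eval y * (ascPochhammer R (n - k)).eval (k + s)) := by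
  induction n generalizing s with
  | zero => simp
  | succ n ih =>
    rw [sum_choose_succ_mul
        (fun i j => (descPochhammer R i).eval y * (ascPochhammer R j).eval (i + s)),
      ← sum_add_distrib, ascPochhammer_succ_eval_left, add_assoc, ih, mul_sum]
    refine sum_congr rfl fun k hk => ?_
    rw [Nat.succ_sub (mem_range_succ_iff.mp hk), ascPochhammer_succ_eval_left,
      descPochhammer_succ_eval]
    push_cast
    ring_nf

theorem rLah_eq_choose_mul {r : ℝ} {n k : ℕ} (hk : k ≤ n) :
    rLah r n k = n.choose k * (ascPochhammer ℝ (n - k)).eval (k + 2 * r) := by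
  rw [rLah, Nat.cast_choose ℝ hk]
  ring

theorem rising_as_lah_falling (r : ℝ) (n : ℕ) (x : ℝ) :
    (ascPochhammer ℝ n).eval (x + r) =
      ∑ k ∈ Finset.range (n + 1), rLah r n k * (descPochhammer ℝ k).eval (x - r) := by
  rw [show x + r = (x - r) + 2 * r by ring,
    ascPochhammer_eval_add_eq_sum_choose_mul_descPochhammer]
  refine sum_congr rfl fun k hk => ?_
  rw [rLah_eq_choose_mul (mem_range_succ_iff.mp hk)]
  ring
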